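/- Let ρ > 0 and ε ∈ (0,1]. Then for every v ∈ ℝ the following three conditions are equivalent: (i) |f_ρ'(v)| ≤ 1 − ε; (ii) |v| ≤ ρ(1 − √ε); (iii) f_ρ''(v) ≥ (2/ρ)√ε. -/

import Mathlib

/-!
Write `m = max (ρ - |v|) 0`. The closed form `f_ρ(v) = F(|v|)` with
`F(u) = u + max (ρ - u) 0 ^ 3 / (3ρ²)` gives `f_ρ' = sign · F'(|·|)` and `f_ρ'' = F''(|·|)`,
hence `|f_ρ'(v)| = 1 - m²/ρ²` and `f_ρ''(v) = 2m/ρ²`; each of the three conditions then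
says `√ε · ρ ≤ m`.
-/

open Set

/-- The smoothed absolute value `f_ρ`. -/
noncomputable def smoothAbs (ρ : ℝ) (v : ℝ) : ℝ :=
  if ρ ≤ |v| then |v| else ρ / 3 + (v ^ 2 / ρ ^ 2) * (ρ - |v| / 3)

section Gluing

variable {E : Type*} [NormedAddCommGroup E] [NormedSpace ℝ E] {f g h : ℝ → E} {c x : ℝ} {d : E}

theorem hasDerivAt_of_eqOn_Iic_Ici (hfg : EqOn f g (Iic c)) (hfh : EqOn f h (Ici c))
    (hg : x ≤ c → HasDerivAt g d x) (hh : c ≤ x → HasDerivAt h d x) : HasDerivAt f d x := by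
  rcases lt_trichotomy x c with hxc | rfl | hcx
  · exact (hg hxc.le).congr_of_eventuallyEq (hfg.eventuallyEq_of_mem (Iic_mem_nhds hxc))
  · have hle := (hg le_rfl).hasDerivWithinAt.congr_of_mem hfg self_mem_Iic
    have hge := (hh le_rfl).hasDerivWithinAt.congr_of_mem hfh self_mem_Ici
    simpa only [Iic_union_Ici, hasDerivWithinAt_univ] using hle.union hge
  · exact (hh hcx.le).congr_of_eventuallyEq (hfh.eventuallyEq_of_mem (Ici_mem_nhds hcx))

theorem HasDerivAt.comp_abs {F : ℝ → E} (hF : HasDerivAt F d |x|) (h0 : x = 0 → d = 0) :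
    HasDerivAt (fun w => F |w|) ((SignType.sign x : ℝ) • d) x := by
  refine hasDerivAt_of_eqOn_Iic_Ici (c := 0) (g := fun w => F (-w)) (h := F)
    (fun w hw => by simp [abs_of_nonpos (mem_Iic.1 hw)])
    (fun w hw => by simp [abs_of_nonneg (mem_Ici.1 hw)]) (fun hx => ?_) (fun hx => ?_)
  · rw [abs_of_nonpos hx] at hF
    refine (hF.scomp x (hasDerivAt_neg x)).congr_deriv ?_
    rcases hx.lt_or_eq with hx | rfl
    · rw [sign_neg hx]; simp
    · simp [h0 rfl]
  · rw [abs_of_nonneg hx] at hF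
    refine hF.congr_deriv ?_
    rcases hx.lt_or_eq with hx | rfl
    · rw [sign_pos hx]; simp
    · simp [h0 rfl]

theorem HasDerivAt.sign_smul_comp_abs {G : ℝ → E} (hG : HasDerivAt G d |x|) (h0 : G 0 = 0) :
    HasDerivAt (fun w => (SignType.sign w : ℝ) • G |w|) d x := by
  refine hasDerivAt_of_eqOn_Iic_Ici (c := 0) (g := fun w => -G (-w)) (h := G)
    (fun w hw => ?_) (fun w hw => ?_) (fun hx => ?_) (fun hx => ?_)
  · rcases (mem_Iic.1 hw).lt_or_eq with hw | rfl
    · simp [hw, abs_of_neg hw]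
    · simp [h0]
  · rcases (mem_Ici.1 hw).lt_or_eq with hw | rfl
    · simp [hw, abs_of_pos hw]
    · simp [h0]
  · rw [abs_of_nonpos hx] at hG
    exact (hG.scomp x (hasDerivAt_neg x)).neg.congr_deriv (by simp)
  · rwa [abs_of_nonneg hx] at hG

end Gluing

theorem hasDerivAt_max_zero_pow {n : ℕ} (hn : 2 ≤ n) (x : ℝ) :
    HasDerivAt (fun t => max t 0 ^ n) (n * max x 0 ^ (n - 1)) x := by
  refine hasDerivAt_of_eqOn_Iic_Ici (c := 0) (g := fun _ => 0) (h := fun t => t ^ n)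
    (fun t ht => ?_) (fun t ht => ?_) (fun hx => ?_) (fun hx => ?_)
  · show max t 0 ^ n = 0
    rw [max_eq_right (mem_Iic.1 ht), zero_pow (by omega)]
  · simp [max_eq_left (mem_Ici.1 ht)]
  · rw [max_eq_right hx, zero_pow (by omega), mul_zero]
    exact hasDerivAt_const x 0
  · rw [max_eq_left hx]
    exact hasDerivAt_pow n x

noncomputable def smoothAbsProfile (ρ u : ℝ) : ℝ :=
  u + max (ρ - u) 0 ^ 3 / (3 * ρ ^ 2)

theorem hasDerivAt_smoothAbsProfile (ρ u : ℝ) :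
    HasDerivAt (smoothAbsProfile ρ) (1 - max (ρ - u) 0 ^ 2 / ρ ^ 2) u := by
  have hmax := (hasDerivAt_max_zero_pow (n := 3) (by norm_num) (ρ - u)).comp u
    ((hasDerivAt_const u ρ).sub (hasDerivAt_id u))
  refine ((hasDerivAt_id u).add (hmax.div_const _)).congr_deriv ?_
  push_cast
  ring

section SmoothAbs

variable {ρ : ℝ}

theorem smoothAbs_eq_smoothAbsProfile_abs (hρ : ρ ≠ 0) :
    smoothAbs ρ = fun v => smoothAbsProfile ρ |v| := by
  ext v
  unfold smoothAbs smoothAbsProfile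
  split_ifs with h
  · rw [max_eq_right (by linarith)]
    ring
  · rw [max_eq_left (by linarith), ← sq_abs v]
    field_simp
    ring

theorem hasDerivAt_smoothAbs (hρ : 0 < ρ) (v : ℝ) :
    HasDerivAt (smoothAbs ρ) (SignType.sign v * (1 - max (ρ - |v|) 0 ^ 2 / ρ ^ 2)) v := by
  rw [smoothAbs_eq_smoothAbsProfile_abs hρ.ne']
  refine (hasDerivAt_smoothAbsProfile ρ |v|).comp_abs fun hv => ?_
  simp [hv, hρ.le, hρ.ne']

theorem deriv_smoothAbs (hρ : 0 < ρ) :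
    deriv (smoothAbs ρ) = fun v => SignType.sign v * (1 - max (ρ - |v|) 0 ^ 2 / ρ ^ 2) :=
  funext fun v => (hasDerivAt_smoothAbs hρ v).deriv

theorem hasDerivAt_deriv_smoothAbs (hρ : 0 < ρ) (v : ℝ) :
    HasDerivAt (deriv (smoothAbs ρ)) (2 * max (ρ - |v|) 0 / ρ ^ 2) v := by
  have hprofile' : HasDerivAt (fun u => 1 - max (ρ - u) 0 ^ 2 / ρ ^ 2)
      (2 * max (ρ - |v|) 0 / ρ ^ 2) |v| := by
    have hmax := (hasDerivAt_max_zero_pow (n := 2) le_rfl (ρ - |v|)).comp |v|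
      ((hasDerivAt_const |v| ρ).sub (hasDerivAt_id |v|))
    refine ((hasDerivAt_const |v| 1).sub (hmax.div_const _)).congr_deriv ?_
    push_cast
    ring
  rw [deriv_smoothAbs hρ]
  refine hprofile'.sign_smul_comp_abs ?_
  simp [hρ.le, hρ.ne']

theorem abs_deriv_smoothAbs (hρ : 0 < ρ) (v : ℝ) :
    |deriv (smoothAbs ρ) v| = 1 - max (ρ - |v|) 0 ^ 2 / ρ ^ 2 := by
  rw [deriv_smoothAbs hρ]
  rcases eq_or_ne v 0 with rfl | hv
  · simp [hρ.le, hρ.ne']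
  · have hmax : max (ρ - |v|) 0 ^ 2 ≤ ρ ^ 2 :=
      pow_le_pow_left₀ (le_max_right _ _) (max_le (by linarith [abs_nonneg v]) hρ.le) 2
    have hnonneg : 0 ≤ 1 - max (ρ - |v|) 0 ^ 2 / ρ ^ 2 :=
      sub_nonneg.2 (div_le_one_of_le₀ hmax (sq_nonneg ρ))
    rw [abs_mul, abs_of_nonneg hnonneg]
    rcases hv.lt_or_gt with hv | hv <;> simp [hv]

end SmoothAbs

theorem smoothAbs_deriv_bound_iff (ρ ε : ℝ) (hρ : 0 < ρ) (hε : ε ∈ Set.Ioc (0:ℝ) 1) (v : ℝ) :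
    (|deriv (smoothAbs ρ) v| ≤ 1 - ε ↔ |v| ≤ ρ * (1 - Real.sqrt ε)) ∧
    (|v| ≤ ρ * (1 - Real.sqrt ε) ↔ (2 / ρ) * Real.sqrt ε ≤ deriv (deriv (smoothAbs ρ)) v) := by
  set m := max (ρ - |v|) 0
  have hsρ : 0 < Real.sqrt ε * ρ := mul_pos (Real.sqrt_pos.2 hε.1) hρ
  have le_m_iff : Real.sqrt ε * ρ ≤ m ↔ |v| ≤ ρ * (1 - Real.sqrt ε) := by
    rw [le_max_iff, or_iff_left hsρ.not_ge]
    constructor <;> intro h <;> linarith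
  rw [abs_deriv_smoothAbs hρ, (hasDerivAt_deriv_smoothAbs hρ v).deriv, ← le_m_iff]
  constructor
  · have hsq : ε * ρ ^ 2 = (Real.sqrt ε * ρ) ^ 2 := by rw [mul_pow, Real.sq_sqrt hε.1.le]
    rw [sub_le_sub_iff_left, le_div_iff₀ (by positivity), hsq,
      pow_le_pow_iff_left₀ hsρ.le (le_max_right _ _) two_ne_zero]
  · rw [show 2 / ρ * Real.sqrt ε = 2 * (Real.sqrt ε * ρ) / ρ ^ 2 by field_simp,
      div_le_div_iff_of_pos_right (by positivity), mul_le_mul_iff_right₀ two_pos]
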